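/- Let A be a finite alphabet and (τ_n)_{n≥0} a directive sequence of non-erasing substitutions on A. Fix n, ℓ ≥ 1, assume that τ_{[n+1,n+ℓ]} is a word builder at level n, and assume that every letter b ∈ A either precedes some letter or is preceded by some letter at level n. Then every word w ∈ L(τ) that has length at most min_{c∈A} |w_n(c)| and occurs as a factor of w_m(c') for some m ≥ n+1 and c' ∈ A is a factor of w_{n+ℓ}(c) for some c ∈ A. -/
import Mathlib


open MeasureTheory

variable {A : Type*}

/-- Apply a substitution to a word by concatenation. -/
def applyWord (σ : A → List A) (u : List A) : List A := u.flatMap σ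

/-- Composition of substitutions: first apply `τ₂`, then the extension of `τ₁`. -/
def substComp (τ₁ τ₂ : A → List A) : A → List A := fun a => applyWord τ₁ (τ₂ a)

/-- `substInterval τ m n` is `τ_{[m,n]} = τ_m ∘ τ_{m+1} ∘ ⋯ ∘ τ_n` (the identity if `m > n`). -/
def substInterval (τ : ℕ → A → List A) (m n : ℕ) : A → List A :=
  ((List.range (n + 1 - m)).map fun i => τ (m + i)).foldr substComp fun a => [a]

/-- `wseq τ n a = w_n(a) = τ_{[0,n]}(a)`. -/
def wseq (τ : ℕ → A → List A) (n : ℕ) : A → List A := substInterval τ 0 n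

/-- The substitution matrix: `M_σ[a,b]` is the number of occurrences of `a` in `σ b`. -/
def substMatrix [DecidableEq A] (σ : A → List A) : Matrix A A ℕ :=
  Matrix.of fun a b => (σ b).count a

/-- `M_{[m,n]} = M_{τ_m} ⋯ M_{τ_n}`. -/
def matInterval [Fintype A] [DecidableEq A] (τ : ℕ → A → List A) (m n : ℕ) :
    Matrix A A ℕ :=
  ((List.range (n + 1 - m)).map fun i => substMatrix (τ (m + i))).prod

/-- The language of a directive sequence: factors of the words `w_n(a)`. -/
def SadicLang (τ : ℕ → A → List A) : Set (List A) :=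
  {u | ∃ (n : ℕ) (a : A), u <:+: wseq τ n a}

/-- A finite word occurs as a factor of a two-sided sequence. -/
def FactorOf (u : List A) (x : ℤ → A) : Prop :=
  ∃ k : ℤ, u = (List.range u.length).map fun i => x (k + (i : ℤ))

/-- The S-adic subshift generated by a directive sequence. -/
def SadicShift (τ : ℕ → A → List A) : Set (ℤ → A) :=
  {x | ∀ u : List A, FactorOf u x → u ∈ SadicLang τ}

/-- The shift map on `A^ℤ`. -/
def shift (x : ℤ → A) : ℤ → A := fun n => x (n + 1)

/-- The cylinder set `{x : x₁ x₂ ⋯ x_{|w|} = w}`. -/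
def cylSet (w : List A) : Set (ℤ → A) :=
  {x | (List.range w.length).map (fun i => x (1 + (i : ℤ))) = w}

/-- `a` precedes `b` at level `n`: `ab` is a factor of `τ_{[n+1,n+m]}(c)` for some `m ≥ 1`, `c`. -/
def Precedes (τ : ℕ → A → List A) (n : ℕ) (a b : A) : Prop :=
  ∃ m : ℕ, 1 ≤ m ∧ ∃ c : A, [a, b] <:+: substInterval τ (n + 1) (n + m) c

/-- `τ_{[n+1,n+ℓ]}` is a word builder at level `n`. -/
def WordBuilder (τ : ℕ → A → List A) (n ℓ : ℕ) : Prop :=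
  ∀ a b : A, Precedes τ n a b →
    ∃ c : A, [a, b] <:+: substInterval τ (n + 1) (n + ℓ) c


section Aux

variable {A : Type*}

lemma applyWord_append (σ : A → List A) (u v : List A) :
    applyWord σ (u ++ v) = applyWord σ u ++ applyWord σ v := by
  simp [applyWord]

lemma applyWord_applyWord (σ θ : A → List A) (u : List A) :
    applyWord σ (applyWord θ u) = applyWord (substComp σ θ) u := by
  show (u.flatMap θ).flatMap σ = _
  rw [List.flatMap_assoc]
  rfl

lemma substComp_assoc (f g h : A → List A) :
    substComp (substComp f g) h = substComp f (substComp g h) := by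
  funext a
  simp [substComp, applyWord_applyWord]

lemma substComp_id_right (f : A → List A) :
    substComp f (fun a => [a]) = f := by
  funext a; simp [substComp, applyWord]

lemma foldr_substComp (L : List (A → List A)) (σ : A → List A) :
    List.foldr substComp σ L = substComp (List.foldr substComp (fun a => [a]) L) σ := by
  induction L with
  | nil =>
    funext a; simp [substComp, applyWord]
  | cons f L ih =>
    simp [List.foldr_cons, ih, substComp_assoc]

lemma substInterval_of_lt (τ : ℕ → A → List A) {m n : ℕ} (h : n < m) :
    substInterval τ m n = fun a => [a] := by
  unfold substInterval
  have : n + 1 - m = 0 := by omega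
  simp [this]

lemma substInterval_self (τ : ℕ → A → List A) (m : ℕ) :
    substInterval τ m m = τ m := by
  funext a
  unfold substInterval
  have h1 : m + 1 - m = 1 := by omega
  rw [h1]
  simp [substComp, applyWord, List.range_succ]

lemma substInterval_succ_left (τ : ℕ → A → List A) {m n : ℕ} (h : m ≤ n) :
    substInterval τ m n = substComp (τ m) (substInterval τ (m + 1) n) := by
  unfold substInterval
  have h1 : n + 1 - m = (n + 1 - (m + 1)) + 1 := by omega
  rw [h1, List.range_succ_eq_map]
  rw [List.map_cons, List.map_map, List.foldr_cons, Nat.add_zero]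
  have h2 : ((fun i => τ (m + i)) ∘ Nat.succ) = fun i => τ (m + 1 + i) := by
    funext i
    show τ (m + (i + 1)) = τ (m + 1 + i)
    exact congrArg τ (by omega)
  rw [h2]

lemma substInterval_succ_right (τ : ℕ → A → List A) {m n : ℕ} (h : m ≤ n + 1) :
    substInterval τ m (n + 1) = substComp (substInterval τ m n) (τ (n + 1)) := by
  unfold substInterval
  have h1 : n + 1 + 1 - m = (n + 1 - m) + 1 := by omega
  rw [h1, List.range_succ, List.map_append]
  rw [List.foldr_append]
  simp only [List.map_cons, List.map_nil, List.foldr_cons, List.foldr_nil]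
  rw [substComp_id_right]
  have h2 : m + (n + 1 - m) = n + 1 := by omega
  rw [h2, foldr_substComp]

lemma substInterval_split (τ : ℕ → A → List A) (j : ℕ) {m n : ℕ} (h : m + j ≤ n) :
    substInterval τ m n =
      fun a => applyWord (substInterval τ m (m + j)) (substInterval τ (m + j + 1) n a) := by
  induction j with
  | zero =>
    rw [substInterval_succ_left τ (by omega : m ≤ n)]
    funext a
    simp only [Nat.add_zero, substInterval_self]
    rfl
  | succ j ih =>
    rw [ih (by omega)]
    funext a
    rw [substInterval_succ_left τ (show m + j + 1 ≤ n by omega)]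
    show applyWord _ (applyWord (τ (m + j + 1)) _) = _
    rw [applyWord_applyWord]
    have : substComp (substInterval τ m (m + j)) (τ (m + j + 1))
        = substInterval τ m (m + (j + 1)) := by
      rw [show m + (j + 1) = (m + j) + 1 by omega,
        substInterval_succ_right τ (by omega : m ≤ m + j + 1)]
    rw [this]
    rfl

lemma applyWord_ne_nil {σ : A → List A} (hσ : ∀ a, σ a ≠ []) {u : List A} (hu : u ≠ []) :
    applyWord σ u ≠ [] := by
  match u with
  | [] => exact absurd rfl hu
  | b :: r =>
    simp only [applyWord, List.flatMap_cons, ne_eq, List.append_eq_nil_iff]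
    intro hc
    exact hσ b hc.1

lemma substInterval_ne_nil (τ : ℕ → A → List A) (hne : ∀ n a, τ n a ≠ [])
    (m n : ℕ) (a : A) : substInterval τ m n a ≠ [] := by
  have key : ∀ L : List (A → List A), (∀ σ ∈ L, ∀ a, σ a ≠ []) →
      ∀ a : A, List.foldr substComp (fun a => [a]) L a ≠ [] := by
    intro L
    induction L with
    | nil => intro _ a; simp
    | cons f L ih =>
      intro hL a
      simp only [List.foldr_cons]
      show applyWord f (List.foldr substComp (fun a => [a]) L a) ≠ []
      exact applyWord_ne_nil (hL f (by simp)) (ih (fun σ hσ => hL σ (by simp [hσ])) a)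
  apply key
  intro σ hσ
  simp only [List.mem_map] at hσ
  obtain ⟨i, _, rfl⟩ := hσ
  exact hne _

lemma infix_applyWord {u v : List A} (σ : A → List A) (h : u <:+: v) :
    applyWord σ u <:+: applyWord σ v := by
  obtain ⟨s, t, rfl⟩ := h
  exact ⟨applyWord σ s, applyWord σ t, by simp [applyWord_append]⟩

lemma applyWord_pair (σ : A → List A) (a b : A) :
    applyWord σ [a, b] = σ a ++ σ b := by
  simp [applyWord]

/-- The key combinatorial lemma: a short word inside `applyWord f u` sits inside the image
of one letter or of two consecutive letters of `u`. -/
lemma key_factor {f : A → List A} :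
    ∀ u : List A, u ≠ [] → ∀ w : List A, w <:+: applyWord f u →
      (∀ a : A, w.length ≤ (f a).length) →
      (∃ a, a ∈ u ∧ w <:+: f a) ∨ (∃ a b, [a, b] <:+: u ∧ w <:+: f a ++ f b) := by
  intro u
  induction u with
  | nil => intro h; exact absurd rfl h
  | cons a u ih =>
    intro _ w hw hlen
    match u with
    | [] =>
      left
      refine ⟨a, by simp, ?_⟩
      simpa [applyWord] using hw
    | b :: u' =>
      obtain ⟨s, t, hst⟩ := hw
      have hX : applyWord f (a :: b :: u') = f a ++ (f b ++ applyWord f u') := by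
        simp [applyWord]
      by_cases hs : (f a).length ≤ s.length
      · -- w is inside the image of the tail
        have hdrop : (s ++ w ++ t).drop (f a).length
            = s.drop (f a).length ++ w ++ t := by
          rw [List.append_assoc, List.drop_append_of_le_length hs, List.append_assoc]
        have hdrop2 : (applyWord f (a :: b :: u')).drop (f a).length
            = applyWord f (b :: u') := by
          rw [hX, List.drop_left]
          simp [applyWord]
        have hw' : w <:+: applyWord f (b :: u') := by
          refine ⟨s.drop (f a).length, t, ?_⟩
          rw [← hdrop2, ← hst, hdrop]
        rcases ih (by simp) w hw' hlen with ⟨c, hc, hcw⟩ | ⟨c, d, hcd, hcdw⟩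
        · exact Or.inl ⟨c, by simp [hc], hcw⟩
        · exact Or.inr ⟨c, d, List.infix_cons hcd, hcdw⟩
      · -- w is inside f a ++ f b
        push_neg at hs
        right
        refine ⟨a, b, ⟨[], u', by simp⟩, ?_⟩
        have h1 : (applyWord f (a :: b :: u')).drop s.length = w ++ t := by
          rw [← hst, List.append_assoc, List.drop_left]
        have hk : s.length + w.length ≤ (f a ++ f b).length := by
          have := hlen b
          simp only [List.length_append]
          omega
        have h4 : (applyWord f (a :: b :: u')).take (s.length + w.length)
            = (f a ++ f b).take (s.length + w.length) := by
          rw [hX, ← List.append_assoc]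
          exact List.take_append_of_le_length hk
        have h2 : (((f a ++ f b).take (s.length + w.length)).drop s.length) = w := by
          rw [← h4, List.drop_take, h1,
            show s.length + w.length - s.length = w.length from by omega,
            List.take_left]
        have h6 := (List.drop_suffix s.length
          ((f a ++ f b).take (s.length + w.length))).isInfix
        rw [h2] at h6
        exact h6.trans (List.take_prefix _ _).isInfix

end Aux

/-- every short enough allowed word occurring at a level `≥ n+1` is a factor
of `w_{n+ℓ}(c)` for some letter `c`, when `τ_{[n+1,n+ℓ]}` is a word builder at level `n`. -/
theorem stmt4 [Fintype A] [Nonempty A]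
    (τ : ℕ → A → List A) (hne : ∀ n a, τ n a ≠ [])
    (n ℓ : ℕ) (hn : 1 ≤ n) (hℓ : 1 ≤ ℓ)
    (hwb : WordBuilder τ n ℓ)
    (hpre : ∀ b : A, (∃ b', Precedes τ n b b') ∨ (∃ a, Precedes τ n a b))
    (w : List A) (hw : w ∈ SadicLang τ)
    (hlen : w.length ≤ Finset.univ.inf' Finset.univ_nonempty
        fun c : A => (wseq τ n c).length)
    (hocc : ∃ m : ℕ, n + 1 ≤ m ∧ ∃ c' : A, w <:+: wseq τ m c') :
    ∃ c : A, w <:+: wseq τ (n + ℓ) c := by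
  classical
  obtain ⟨m, hm, c', hwc⟩ := hocc
  have hnm : n ≤ m := by omega
  have hlen' : ∀ c : A, w.length ≤ (wseq τ n c).length := by
    intro c
    exact le_trans hlen (Finset.inf'_le _ (Finset.mem_univ c))
  -- decompose w_m(c') = w_n applied to u := τ_{[n+1,m]}(c')
  set u : List A := substInterval τ (n + 1) m c' with hu
  have hsplit : wseq τ m c' = applyWord (wseq τ n) u := by
    have := substInterval_split τ n (m := 0) (n := m) (by omega)
    rw [wseq, this]
    simp only [Nat.zero_add]
    rfl
  have hune : u ≠ [] := substInterval_ne_nil τ hne _ _ _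
  rw [hsplit] at hwc
  -- from a pair factor of the appropriate interval, conclude
  have conclude : ∀ a b : A, Precedes τ n a b → w <:+: wseq τ n a ++ wseq τ n b →
      ∃ c : A, w <:+: wseq τ (n + ℓ) c := by
    intro a b hab hwab
    obtain ⟨c, hc⟩ := hwb a b hab
    refine ⟨c, ?_⟩
    have hsplit2 : wseq τ (n + ℓ) c
        = applyWord (wseq τ n) (substInterval τ (n + 1) (n + ℓ) c) := by
      have := substInterval_split τ n (m := 0) (n := n + ℓ) (by omega)
      rw [wseq, this]
      simp only [Nat.zero_add]
      rfl
    rw [hsplit2]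
    have := infix_applyWord (wseq τ n) hc
    rw [applyWord_pair] at this
    exact hwab.trans this
  rcases key_factor u hune w hwc hlen' with ⟨a, _, haw⟩ | ⟨a, b, hab, hwab⟩
  · rcases hpre a with ⟨b', hb'⟩ | ⟨a', ha'⟩
    · exact conclude a b' hb' (haw.trans (List.prefix_append _ _).isInfix)
    · exact conclude a' a ha' (haw.trans (List.suffix_append _ _).isInfix)
  · refine conclude a b ?_ hwab
    exact ⟨m - n, by omega, c', by rwa [show n + (m - n) = m by omega]⟩
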